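/- arXiv:1603.01798 — 7 statements merged into one kernel-verified Lean document; each statement's English description precedes it below -/
import Mathlib

section
/- If S : C → C is β-demicontractive with β ∈ [0,1) and Fix(S) ≠ ∅, then Fix(S) is closed and convex. -/
open RealInnerProductSpace Filter Topology

lemma stmt1_key {H : Type*} [NormedAddCommGroup H] [InnerProductSpace ℝ H]
    {x p y : H} {β : ℝ}
    (h : ‖y - p‖ ^ 2 ≤ ‖x - p‖ ^ 2 + β * ‖x - y‖ ^ 2) :
    (1 - β) * ‖x - y‖ ^ 2 ≤ 2 * ⟪x - y, x - p⟫ := by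
  have e : y - p = (x - p) - (x - y) := by abel
  rw [e, norm_sub_sq_real] at h
  have hc := real_inner_comm (x - p) (x - y)
  nlinarith

/-- If `S : C → C` is `β`-demicontractive with `β ∈ [0,1)` and `Fix(S) ≠ ∅`,
then `Fix(S)` is closed and convex. -/
theorem stmt1 {H : Type*} [NormedAddCommGroup H] [InnerProductSpace ℝ H]
    (C : Set H) (hCne : C.Nonempty) (hCc : IsClosed C) (hCv : Convex ℝ C)
    (S : H → H) (hS : Set.MapsTo S C C)
    (β : ℝ) (hβ0 : 0 ≤ β) (hβ1 : β < 1)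
    (hfix : ∃ x ∈ C, S x = x)
    (hdemi : ∀ p ∈ C, S p = p → ∀ x ∈ C,
      ‖S x - p‖ ^ 2 ≤ ‖x - p‖ ^ 2 + β * ‖x - S x‖ ^ 2) :
    IsClosed {x | x ∈ C ∧ S x = x} ∧ Convex ℝ {x | x ∈ C ∧ S x = x} := by
  -- helper to conclude S x = x from (1-β)‖x - Sx‖² ≤ 0
  have fix_of : ∀ x : H, (1 - β) * ‖x - S x‖ ^ 2 ≤ 0 → S x = x := by
    intro x hle
    have h0 : ‖x - S x‖ ^ 2 ≤ 0 := by nlinarith [sq_nonneg ‖x - S x‖]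
    have h1 : ‖x - S x‖ ^ 2 = 0 := le_antisymm h0 (sq_nonneg _)
    have h2 : ‖x - S x‖ = 0 := by
      have := pow_eq_zero_iff (n := 2) (by norm_num) |>.mp h1
      exact this
    have : x - S x = 0 := norm_eq_zero.mp h2
    have := sub_eq_zero.mp this
    exact this.symm
  constructor
  · apply IsSeqClosed.isClosed
    intro u x hu hux
    have hxC : x ∈ C := hCc.isSeqClosed (fun n => (hu n).1) hux
    refine ⟨hxC, ?_⟩
    have hkey : ∀ n, (1 - β) * ‖x - S x‖ ^ 2 ≤ 2 * ⟪x - S x, x - u n⟫ :=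
      fun n => stmt1_key (hdemi (u n) (hu n).1 (hu n).2 x hxC)
    have hlim : Tendsto (fun n => 2 * ⟪x - S x, x - u n⟫) atTop (𝓝 0) := by
      have h1 : Tendsto (fun n => x - u n) atTop (𝓝 (x - x)) :=
        tendsto_const_nhds.sub hux
      have h2 : Tendsto (fun n => (⟪x - S x, x - u n⟫ : ℝ)) atTop
          (𝓝 ⟪x - S x, x - x⟫) :=
        Filter.Tendsto.inner tendsto_const_nhds h1
      have : (⟪x - S x, x - x⟫ : ℝ) = 0 := by simp
      rw [this] at h2
      simpa using h2.const_mul 2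
    exact fix_of x (ge_of_tendsto' hlim hkey)
  · intro p hp q hq a b ha hb hab
    set x := a • p + b • q with hxdef
    have hxC : x ∈ C := hCv hp.1 hq.1 ha hb hab
    have h1 : (1 - β) * ‖x - S x‖ ^ 2 ≤ 2 * ⟪x - S x, x - p⟫ :=
      stmt1_key (hdemi p hp.1 hp.2 x hxC)
    have h2 : (1 - β) * ‖x - S x‖ ^ 2 ≤ 2 * ⟪x - S x, x - q⟫ :=
      stmt1_key (hdemi q hq.1 hq.2 x hxC)
    have hip : (⟪x - S x, x - p⟫ : ℝ) = ⟪x - S x, x⟫ - ⟪x - S x, p⟫ :=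
      inner_sub_right _ _ _
    have hiq : (⟪x - S x, x - q⟫ : ℝ) = ⟪x - S x, x⟫ - ⟪x - S x, q⟫ :=
      inner_sub_right _ _ _
    have hx : (⟪x - S x, x⟫ : ℝ) = a * ⟪x - S x, p⟫ + b * ⟪x - S x, q⟫ := by
      simp [hxdef, inner_add_right, inner_smul_right]
    have hb' : b = 1 - a := by linarith
    have key : a * (2 * ⟪x - S x, x - p⟫) + b * (2 * ⟪x - S x, x - q⟫) = 0 := by
      rw [hip, hiq, hx, hb']; ring
    have hcomb := add_le_add (mul_le_mul_of_nonneg_left h1 ha)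
      (mul_le_mul_of_nonneg_left h2 hb)
    have hlhs : a * ((1 - β) * ‖x - S x‖ ^ 2) + b * ((1 - β) * ‖x - S x‖ ^ 2)
        = (1 - β) * ‖x - S x‖ ^ 2 := by rw [hb']; ring
    have hfx : S x = x := fix_of x (by linarith)
    exact ⟨hxC, hfx⟩
end

section
/- Let F : C → H be η-strongly monotone and L-Lipschitz, μ ∈ (0, 2η/L²), and set τ = 1 - √(1 - μ(2η - μL²)) ∈ (0,1). Then for every ν ∈ (0, μ) and all x, y ∈ C, ‖(y - νF(y)) - x‖ ≤ (1 - ντ/μ)‖y - x‖ + ν‖F(x)‖. -/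
/-!
With `a = y - x` and `b = F y - F x`, strong monotonicity and the Lipschitz bound give
`‖a - μ b‖² ≤ (1 - μ(2η - μL²)) ‖a‖²`, i.e. `G^μ` is a `(1 - τ)`-contraction on `C`.
For `ν ≤ μ`, `a - ν b` is the convex combination `(1 - ν/μ) a + (ν/μ) (a - μ b)`, so `G^ν`
is a `(1 - ντ/μ)`-contraction, and `G^ν y - x = (G^ν y - G^ν x) - ν F x`.
-/

open RealInnerProductSpace Filter Topology

section Contraction

variable {H : Type*} [NormedAddCommGroup H] [InnerProductSpace ℝ H]

theorem norm_sub_smul_sq_le_of_inner_le {a b : H} {η L μ : ℝ} (hμ : 0 ≤ μ)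
    (hinner : η * ‖a‖ ^ 2 ≤ ⟪b, a⟫) (hnorm : ‖b‖ ≤ L * ‖a‖) :
    ‖a - μ • b‖ ^ 2 ≤ (1 - μ * (2 * η - μ * L ^ 2)) * ‖a‖ ^ 2 := by
  have hexpand : ‖a - μ • b‖ ^ 2 = ‖a‖ ^ 2 - 2 * μ * ⟪b, a⟫ + μ ^ 2 * ‖b‖ ^ 2 := by
    rw [norm_sub_sq_real, real_inner_smul_right, norm_smul, Real.norm_of_nonneg hμ,
      real_inner_comm]
    ring
  have hnorm_sq : ‖b‖ ^ 2 ≤ L ^ 2 * ‖a‖ ^ 2 := by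
    rw [← mul_pow]
    exact pow_le_pow_left₀ (norm_nonneg b) hnorm 2
  rw [hexpand]
  nlinarith [mul_le_mul_of_nonneg_left hinner hμ, mul_le_mul_of_nonneg_left hnorm_sq (sq_nonneg μ)]

theorem norm_sub_smul_le_of_inner_le {a b : H} {η L μ : ℝ} (hμ : 0 ≤ μ)
    (hinner : η * ‖a‖ ^ 2 ≤ ⟪b, a⟫) (hnorm : ‖b‖ ≤ L * ‖a‖) :
    ‖a - μ • b‖ ≤ √(1 - μ * (2 * η - μ * L ^ 2)) * ‖a‖ := by
  calc ‖a - μ • b‖ = √(‖a - μ • b‖ ^ 2) := (Real.sqrt_sq (norm_nonneg _)).symm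
    _ ≤ √((1 - μ * (2 * η - μ * L ^ 2)) * ‖a‖ ^ 2) :=
      Real.sqrt_le_sqrt (norm_sub_smul_sq_le_of_inner_le hμ hinner hnorm)
    _ = √(1 - μ * (2 * η - μ * L ^ 2)) * ‖a‖ := by
      rw [Real.sqrt_mul' _ (sq_nonneg _), Real.sqrt_sq (norm_nonneg _)]

end Contraction

theorem norm_sub_smul_le_interpolate {E : Type*} [SeminormedAddCommGroup E] [NormedSpace ℝ E]
    {a b : E} {ν μ : ℝ} (hν : 0 ≤ ν) (hνμ : ν ≤ μ) (hμ : 0 < μ) :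
    ‖a - ν • b‖ ≤ (1 - ν / μ) * ‖a‖ + ν / μ * ‖a - μ • b‖ := by
  have hcomb : a - ν • b = (1 - ν / μ) • a + (ν / μ) • (a - μ • b) := by
    match_scalars
    · field_simp; ring
    · field_simp
  have hratio_le : ν / μ ≤ 1 := (div_le_one hμ).mpr hνμ
  calc ‖a - ν • b‖ ≤ ‖(1 - ν / μ) • a‖ + ‖(ν / μ) • (a - μ • b)‖ := hcomb ▸ norm_add_le _ _
    _ = (1 - ν / μ) * ‖a‖ + ν / μ * ‖a - μ • b‖ := by
      rw [norm_smul, norm_smul, Real.norm_of_nonneg (by linarith),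
        Real.norm_of_nonneg (div_nonneg hν hμ.le)]

theorem norm_sub_smul_sub_le_of_strongMono_of_lipschitz {H : Type*} [NormedAddCommGroup H]
    [InnerProductSpace ℝ H] {C : Set H} {F : H → H} {η L μ ν : ℝ}
    (hmono : ∀ x ∈ C, ∀ y ∈ C, η * ‖x - y‖ ^ 2 ≤ ⟪F x - F y, x - y⟫)
    (hlip : ∀ x ∈ C, ∀ y ∈ C, ‖F x - F y‖ ≤ L * ‖x - y‖)
    (hμ : 0 < μ) (hν : 0 ≤ ν) (hνμ : ν ≤ μ) {x y : H} (hx : x ∈ C) (hy : y ∈ C) :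
    ‖(y - ν • F y) - (x - ν • F x)‖ ≤
      (1 - ν * (1 - √(1 - μ * (2 * η - μ * L ^ 2))) / μ) * ‖y - x‖ := by
  have hG : (y - ν • F y) - (x - ν • F x) = (y - x) - ν • (F y - F x) := by
    rw [smul_sub]; abel
  have hGμ := norm_sub_smul_le_of_inner_le hμ.le (hmono y hy x hx) (hlip y hy x hx)
  calc ‖(y - ν • F y) - (x - ν • F x)‖
      ≤ (1 - ν / μ) * ‖y - x‖ + ν / μ * ‖(y - x) - μ • (F y - F x)‖ :=
        hG ▸ norm_sub_smul_le_interpolate hν hνμ hμ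
    _ ≤ (1 - ν / μ) * ‖y - x‖ + ν / μ * (√(1 - μ * (2 * η - μ * L ^ 2)) * ‖y - x‖) := by
        gcongr
    _ = (1 - ν * (1 - √(1 - μ * (2 * η - μ * L ^ 2))) / μ) * ‖y - x‖ := by
        field_simp; ring

theorem stmt3_general {H : Type*} [NormedAddCommGroup H] [InnerProductSpace ℝ H]
    (C : Set H)
    (F : H → H) (η L : ℝ)
    (hmono : ∀ x ∈ C, ∀ y ∈ C, η * ‖x - y‖ ^ 2 ≤ ⟪F x - F y, x - y⟫)
    (hlip : ∀ x ∈ C, ∀ y ∈ C, ‖F x - F y‖ ≤ L * ‖x - y‖)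
    (μ : ℝ) (hμ : μ ∈ Set.Ioo (0 : ℝ) (2 * η / L ^ 2))
    (τ : ℝ) (hτ : τ = 1 - Real.sqrt (1 - μ * (2 * η - μ * L ^ 2))) :
    ∀ ν ∈ Set.Ioo (0 : ℝ) μ, ∀ x ∈ C, ∀ y ∈ C,
      ‖(y - ν • F y) - x‖ ≤ (1 - ν * τ / μ) * ‖y - x‖ + ν * ‖F x‖ := by
  rintro ν ⟨hν, hνμ⟩ x hx y hy
  subst hτ
  calc ‖(y - ν • F y) - x‖ = ‖((y - ν • F y) - (x - ν • F x)) - ν • F x‖ := by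
        congr 1; abel
    _ ≤ ‖(y - ν • F y) - (x - ν • F x)‖ + ‖ν • F x‖ := norm_sub_le _ _
    _ ≤ _ := by
        rw [norm_smul, Real.norm_of_nonneg hν.le]
        gcongr
        exact norm_sub_smul_sub_le_of_strongMono_of_lipschitz hmono hlip hμ.1 hν.le hνμ.le hx hy

/-- For `F : C → H` `η`-strongly monotone and `L`-Lipschitz, `μ ∈ (0, 2η/L²)` and
`τ = 1 - √(1 - μ(2η - μL²))`, for every `ν ∈ (0, μ)` and all `x, y ∈ C`:
`‖(y - νF(y)) - x‖ ≤ (1 - ντ/μ)‖y - x‖ + ν‖F(x)‖`. -/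
theorem stmt3 {H : Type*} [NormedAddCommGroup H] [InnerProductSpace ℝ H]
    (C : Set H) (hCne : C.Nonempty) (hCc : IsClosed C) (hCv : Convex ℝ C)
    (F : H → H) (η L : ℝ) (hη : 0 < η) (hL : 0 < L)
    (hmono : ∀ x ∈ C, ∀ y ∈ C, η * ‖x - y‖ ^ 2 ≤ ⟪F x - F y, x - y⟫)
    (hlip : ∀ x ∈ C, ∀ y ∈ C, ‖F x - F y‖ ≤ L * ‖x - y‖)
    (μ : ℝ) (hμ : μ ∈ Set.Ioo (0 : ℝ) (2 * η / L ^ 2))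
    (τ : ℝ) (hτ : τ = 1 - Real.sqrt (1 - μ * (2 * η - μ * L ^ 2))) :
    ∀ ν ∈ Set.Ioo (0 : ℝ) μ, ∀ x ∈ C, ∀ y ∈ C,
      ‖(y - ν • F y) - x‖ ≤ (1 - ν * τ / μ) * ‖y - x‖ + ν * ‖F x‖ :=
  stmt3_general C F η L hmono hlip μ hμ τ hτ
end

section
/- Let (ε_n) be a sequence of nonnegative reals such that for every integer m there exists an integer p ≥ m with ε_p ≤ ε_{p+1}. Let n₀ be an index with ε_{n₀} ≤ ε_{n₀+1}, and for n ≥ n₀ define τ(n) = max{k : n₀ ≤ k ≤ n, ε_k ≤ ε_{k+1}}. Then 0 ≤ ε_n ≤ ε_{τ(n)+1} for all n ≥ n₀, the sequence (τ(n))_{n≥n₀} is nondecreasing, and τ(n) → +∞ as n → ∞. -/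
open Filter Topology

/-- Maingé's lemma: if `(ε_n)` is a sequence of nonnegative reals such that for every `m`
there is `p ≥ m` with `ε_p ≤ ε_{p+1}`, `n₀` satisfies `ε_{n₀} ≤ ε_{n₀+1}`, and
`τ(n) = max {k : n₀ ≤ k ≤ n, ε_k ≤ ε_{k+1}}` for `n ≥ n₀`, then
`0 ≤ ε_n ≤ ε_{τ(n)+1}` for all `n ≥ n₀`, `τ` is nondecreasing on `[n₀, ∞)` and
`τ(n) → ∞`. -/
theorem stmt4 (ε : ℕ → ℝ) (hnn : ∀ n, 0 ≤ ε n)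
    (hinf : ∀ m : ℕ, ∃ p : ℕ, m ≤ p ∧ ε p ≤ ε (p + 1))
    (n₀ : ℕ) (hn₀ : ε n₀ ≤ ε (n₀ + 1))
    (τ : ℕ → ℕ)
    (hτ : ∀ n, n₀ ≤ n → τ n = sSup {k : ℕ | n₀ ≤ k ∧ k ≤ n ∧ ε k ≤ ε (k + 1)}) :
    (∀ n, n₀ ≤ n → 0 ≤ ε n ∧ ε n ≤ ε (τ n + 1)) ∧
    (∀ m n, n₀ ≤ m → m ≤ n → τ m ≤ τ n) ∧
    Tendsto τ atTop atTop := by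
  set S : ℕ → Set ℕ := fun n => {k : ℕ | n₀ ≤ k ∧ k ≤ n ∧ ε k ≤ ε (k + 1)} with hS
  have hbdd : ∀ n, BddAbove (S n) := fun n => ⟨n, fun k hk => hk.2.1⟩
  have hne : ∀ n, n₀ ≤ n → (S n).Nonempty := fun n hn => ⟨n₀, le_refl _, hn, hn₀⟩
  have hmem : ∀ n, n₀ ≤ n → τ n ∈ S n := by
    intro n hn
    rw [hτ n hn]
    exact Nat.sSup_mem (hne n hn) (hbdd n)
  have hub : ∀ n, n₀ ≤ n → ∀ k ∈ S n, k ≤ τ n := by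
    intro n hn k hk
    rw [hτ n hn]
    exact le_csSup (hbdd n) hk
  refine ⟨?_, ?_, ?_⟩
  · intro n hn
    refine ⟨hnn n, ?_⟩
    obtain ⟨h1, h2, h3⟩ := hmem n hn
    have key : ∀ m, τ n ≤ m → m ≤ n → ε m ≤ ε (τ n + 1) := by
      intro m hm
      induction m, hm using Nat.le_induction with
      | base => intro _; exact h3
      | succ m hm ih =>
        intro hmn
        rcases eq_or_lt_of_le hm with heq | hlt
        · rw [← heq]
        · -- m > τ n, m ≤ n, so m ∉ S n
          have hmS : m ∉ S n := fun hmem' => absurd (hub n hn m hmem') (not_le.mpr hlt)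
          have hεm : ε (m + 1) < ε m := by
            by_contra hc
            push_neg at hc
            exact hmS ⟨le_trans h1 hm, Nat.le_of_succ_le hmn, hc⟩
          exact le_trans hεm.le (ih (Nat.le_of_succ_le hmn))
    exact key n h2 (le_refl n)
  · intro m n hm hmn
    have hn : n₀ ≤ n := le_trans hm hmn
    apply hub n hn
    obtain ⟨h1, h2, h3⟩ := hmem m hm
    exact ⟨h1, le_trans h2 hmn, h3⟩
  · rw [tendsto_atTop_atTop]
    intro N
    obtain ⟨p, hp1, hp2⟩ := hinf (max N n₀)
    refine ⟨p, fun n hn => ?_⟩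
    have hn₀p : n₀ ≤ p := le_trans (le_max_right _ _) hp1
    have : p ≤ τ n := hub n (le_trans hn₀p hn) p ⟨hn₀p, hn, hp2⟩
    exact le_trans (le_trans (le_max_left _ _) hp1) this
end

section
/- Let f : C × C → ℝ satisfy: f(x,·) is convex and subdifferentiable on C for each x, and f is Lipschitz-type continuous with constants c₁, c₂ (i.e., f(x,y) + f(y,z) ≥ f(x,z) - c₁‖x-y‖² - c₂‖y-z‖² for all x,y,z ∈ C). Given x_n ∈ C and ρ > 0, let y_n = argmin{ρ f(x_n, y) + ½‖x_n - y‖² : y ∈ C} and z_n = argmin{ρ f(y_n, y) + ½‖x_n - y‖² : y ∈ C}. Then for all y ∈ C: ρ f(y_n, y) ≥ ⟨y_n - x_n, y_n - z_n⟩ - c₁ρ‖y_n - x_n‖² - c₂ρ‖z_n - y_n‖² + ⟨z_n - x_n, z_n - y⟩. -/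
open RealInnerProductSpace Filter Topology

private lemma aux_limit {A B K : ℝ} (hK : 0 ≤ K)
    (h : ∀ t : ℝ, 0 < t → t ≤ 1 → B - t * K ≤ A) : B ≤ A := by
  by_contra hBA
  push_neg at hBA
  set t : ℝ := min 1 ((B - A) / (2 * (K + 1))) with ht
  have hK1 : 0 < K + 1 := by linarith
  have htpos : 0 < t := lt_min one_pos (div_pos (by linarith) (by linarith))
  have ht1 : t ≤ 1 := min_le_left _ _
  have ht2 : t ≤ (B - A) / (2 * (K + 1)) := min_le_right _ _
  have := h t htpos ht1
  have h3 : t * K < B - A := by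
    calc t * K ≤ (B - A) / (2 * (K + 1)) * K := by
          exact mul_le_mul_of_nonneg_right ht2 hK
    _ < B - A := by
          rw [div_mul_eq_mul_div, div_lt_iff₀ (by linarith)]
          nlinarith
  linarith

private lemma aux_vi {H : Type*} [NormedAddCommGroup H] [InnerProductSpace ℝ H]
    {C : Set H} (hCv : Convex ℝ C) {φ : H → ℝ} (hφ : ConvexOn ℝ C φ)
    {ρ : ℝ} (hρ : 0 < ρ) (u : H) {w : H} (hw : w ∈ C)
    (hmin : ∀ y ∈ C, ρ * φ w + ‖u - w‖ ^ 2 / 2 ≤ ρ * φ y + ‖u - y‖ ^ 2 / 2) :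
    ∀ y ∈ C, ⟪w - u, w - y⟫ ≤ ρ * (φ y - φ w) := by
  intro y hy
  have key : ∀ t : ℝ, 0 < t → t ≤ 1 → ⟪w - u, w - y⟫ - t * (‖y - w‖ ^ 2 / 2) ≤ ρ * (φ y - φ w) := by
    intro t htpos ht1
    set yt : H := (1 - t) • w + t • y with hyt
    have hytC : yt ∈ C := hCv hw hy (by linarith) htpos.le (by ring)
    have hmin' := hmin yt hytC
    have hconvt : φ yt ≤ (1 - t) * φ w + t * φ y :=
      hφ.2 hw hy (by linarith) htpos.le (by ring)
    have hexp : ‖u - yt‖ ^ 2 = ‖u - w‖ ^ 2 - 2 * (t * ⟪u - w, y - w⟫) + t ^ 2 * ‖y - w‖ ^ 2 := by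
      have h1 : u - yt = (u - w) - t • (y - w) := by rw [hyt]; module
      rw [h1, @norm_sub_sq_real, real_inner_smul_right, norm_smul]
      simp [mul_pow, abs_of_pos htpos]
    have hip : ⟪w - u, w - y⟫ = ⟪u - w, y - w⟫ := by
      rw [show w - u = -(u - w) by abel, show w - y = -(y - w) by abel, inner_neg_neg]
    rw [hip]
    rw [hexp] at hmin'
    nlinarith [mul_le_mul_of_nonneg_left hconvt hρ.le, sq_nonneg (t * ‖y - w‖)]
  exact aux_limit (by positivity) key

/-- Two-step extragradient estimate: with `y_n`, `z_n` the extragradient iterates for the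
Lipschitz-type continuous bifunction `f` (convex and subdifferentiable in its second
argument), for all `y ∈ C`:
`ρ f(y_n, y) ≥ ⟨y_n - x_n, y_n - z_n⟩ - c₁ρ‖y_n - x_n‖² - c₂ρ‖z_n - y_n‖² + ⟨z_n - x_n, z_n - y⟩`. -/
theorem stmt5 {H : Type*} [NormedAddCommGroup H] [InnerProductSpace ℝ H]
    (C : Set H) (hCne : C.Nonempty) (hCc : IsClosed C) (hCv : Convex ℝ C)
    (f : H → H → ℝ) (hf0 : ∀ x ∈ C, f x x = 0)
    (hconv : ∀ x ∈ C, ConvexOn ℝ C (f x))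
    (hsub : ∀ x ∈ C, ∀ y ∈ C, ∃ g : H, ∀ z ∈ C, f x y + ⟪g, z - y⟫ ≤ f x z)
    (c₁ c₂ : ℝ) (hc₁ : 0 < c₁) (hc₂ : 0 < c₂)
    (hlt : ∀ x ∈ C, ∀ y ∈ C, ∀ z ∈ C,
      f x z - c₁ * ‖x - y‖ ^ 2 - c₂ * ‖y - z‖ ^ 2 ≤ f x y + f y z)
    (ρ : ℝ) (hρ : 0 < ρ)
    (xn yn zn : H) (hxn : xn ∈ C) (hyn : yn ∈ C) (hzn : zn ∈ C)
    (hymin : ∀ y ∈ C,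
      ρ * f xn yn + ‖xn - yn‖ ^ 2 / 2 ≤ ρ * f xn y + ‖xn - y‖ ^ 2 / 2)
    (hzmin : ∀ y ∈ C,
      ρ * f yn zn + ‖xn - zn‖ ^ 2 / 2 ≤ ρ * f yn y + ‖xn - y‖ ^ 2 / 2) :
    ∀ y ∈ C,
      ⟪yn - xn, yn - zn⟫ - c₁ * ρ * ‖yn - xn‖ ^ 2 - c₂ * ρ * ‖zn - yn‖ ^ 2
          + ⟪zn - xn, zn - y⟫ ≤ ρ * f yn y := by
  intro y hy
  have hvi1 := aux_vi hCv (hconv xn hxn) hρ xn hyn hymin zn hzn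
  have hvi2 := aux_vi hCv (hconv yn hyn) hρ xn hzn hzmin y hy
  have hL := hlt xn hxn yn hyn zn hzn
  have e1 : ‖xn - yn‖ = ‖yn - xn‖ := norm_sub_rev _ _
  have e2 : ‖yn - zn‖ = ‖zn - yn‖ := norm_sub_rev _ _
  rw [e1, e2] at hL
  nlinarith [mul_le_mul_of_nonneg_left (show f xn zn - f xn yn ≤ f yn zn + c₁ * ‖yn - xn‖ ^ 2 + c₂ * ‖zn - yn‖ ^ 2 by linarith) hρ.le]
end

section
/- Let f : C × C → ℝ be pseudomonotone with f(x,x)=0, Lipschitz-type continuous with constants c₁, c₂, and f(x,·) convex and subdifferentiable. Let x* ∈ EP(f,C), x_n ∈ C, ρ > 0, y_n = argmin{ρ f(x_n,y) + ½‖x_n-y‖² : y ∈ C}, z_n = argmin{ρ f(y_n,y) + ½‖x_n-y‖² : y ∈ C}. Then ‖z_n - x*‖² ≤ ‖x_n - x*‖² - (1 - 2ρc₁)‖y_n - x_n‖² - (1 - 2ρc₂)‖y_n - z_n‖². -/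
/-!
Each extragradient step is a proximal step: `y ↦ ρ f(u, y) + ½‖x - y‖²` is `1`-strongly convex,
so its minimiser `m` over `C` satisfies the three-point inequality
`ρ f(u, m) + ½‖x - m‖² + ½‖y - m‖² ≤ ρ f(u, y) + ½‖x - y‖²` for every `y ∈ C`.
Applying it to `yₙ` at the point `zₙ` and to `zₙ` at the point `x*` and adding, the bifunction
terms left over are bounded by the Lipschitz-type inequality and by `ρ f(yₙ, x*) ≤ 0`, which
is pseudomonotonicity applied to `f(x*, yₙ) ≥ 0`.
-/

open RealInnerProductSpace Filter Topology

section
variable {H : Type*} [NormedAddCommGroup H] [InnerProductSpace ℝ H] {s : Set H}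

theorem ConvexOn.strongConvexOn_add_half_sq_norm_sub {h : H → ℝ} (hh : ConvexOn ℝ s h) (x : H) :
    StrongConvexOn s 1 fun y ↦ h y + ‖x - y‖ ^ 2 / 2 := by
  rw [strongConvexOn_iff_convex]
  have hlin : ConvexOn ℝ s fun y ↦ ‖x‖ ^ 2 / 2 - ⟪x, y⟫ :=
    (convexOn_const _ hh.1).sub ((innerₗ H x).concaveOn hh.1)
  refine (hh.add hlin).congr fun y _ ↦ ?_
  simp only [Pi.add_apply, norm_sub_sq_real]
  ring

theorem StrongConvexOn.add_sq_norm_sub_le_of_isMinOn {f : H → ℝ} {m : ℝ} {a y : H}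
    (hf : StrongConvexOn s m f) (hmin : IsMinOn f s a) (ha : a ∈ s) (hy : y ∈ s) :
    f a + m / 2 * ‖y - a‖ ^ 2 ≤ f y := by
  -- minimality at `(1 - t) • a + t • y`, divided by `t`, then `t → 0⁺`
  have key : ∀ t ∈ Set.Ioo (0 : ℝ) 1, f a + (1 - t) * (m / 2 * ‖y - a‖ ^ 2) ≤ f y := by
    rintro t ⟨ht0, ht1⟩
    have hmem := hf.1 ha hy (sub_nonneg.2 ht1.le) ht0.le (sub_add_cancel 1 t)
    have hle := isMinOn_iff.1 hmin _ hmem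
    have hconv := hf.2 ha hy (sub_nonneg.2 ht1.le) ht0.le (sub_add_cancel 1 t)
    rw [norm_sub_rev] at hconv
    simp only [smul_eq_mul] at hconv
    nlinarith
  have hlim : Tendsto (fun t : ℝ ↦ f a + (1 - t) * (m / 2 * ‖y - a‖ ^ 2)) (𝓝[>] 0)
      (𝓝 (f a + m / 2 * ‖y - a‖ ^ 2)) := by
    have hcont : Continuous fun t : ℝ ↦ f a + (1 - t) * (m / 2 * ‖y - a‖ ^ 2) := by fun_prop
    simpa using tendsto_nhdsWithin_of_tendsto_nhds (hcont.tendsto 0)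
  exact le_of_tendsto hlim (eventually_of_mem (Ioo_mem_nhdsGT one_pos) key)

theorem ConvexOn.add_half_sq_norm_sub_le_of_forall_le {h : H → ℝ} (hh : ConvexOn ℝ s h)
    {x m y : H} (hmin : ∀ z ∈ s, h m + ‖x - m‖ ^ 2 / 2 ≤ h z + ‖x - z‖ ^ 2 / 2)
    (hm : m ∈ s) (hy : y ∈ s) :
    h m + ‖x - m‖ ^ 2 / 2 + ‖y - m‖ ^ 2 / 2 ≤ h y + ‖x - y‖ ^ 2 / 2 := by
  have := (hh.strongConvexOn_add_half_sq_norm_sub x).add_sq_norm_sub_le_of_isMinOn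
    (isMinOn_iff.2 hmin) hm hy
  linarith

end

theorem stmt6_general {H : Type*} [NormedAddCommGroup H] [InnerProductSpace ℝ H]
    (C : Set H)
    (f : H → H → ℝ)
    (hpm : ∀ x ∈ C, ∀ y ∈ C, 0 ≤ f x y → f y x ≤ 0)
    (hconv : ∀ x ∈ C, ConvexOn ℝ C (f x))
    (c₁ c₂ : ℝ)
    (hlt : ∀ x ∈ C, ∀ y ∈ C, ∀ z ∈ C,
      f x z - c₁ * ‖x - y‖ ^ 2 - c₂ * ‖y - z‖ ^ 2 ≤ f x y + f y z)
    (ρ : ℝ) (hρ : 0 < ρ)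
    (xstar : H) (hxs : xstar ∈ C) (hEP : ∀ y ∈ C, 0 ≤ f xstar y)
    (xn yn zn : H) (hxn : xn ∈ C) (hyn : yn ∈ C) (hzn : zn ∈ C)
    (hymin : ∀ y ∈ C,
      ρ * f xn yn + ‖xn - yn‖ ^ 2 / 2 ≤ ρ * f xn y + ‖xn - y‖ ^ 2 / 2)
    (hzmin : ∀ y ∈ C,
      ρ * f yn zn + ‖xn - zn‖ ^ 2 / 2 ≤ ρ * f yn y + ‖xn - y‖ ^ 2 / 2) :
    ‖zn - xstar‖ ^ 2
      ≤ ‖xn - xstar‖ ^ 2 - (1 - 2 * ρ * c₁) * ‖yn - xn‖ ^ 2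
          - (1 - 2 * ρ * c₂) * ‖yn - zn‖ ^ 2 := by
  have hy_step : ρ * f xn yn + ‖xn - yn‖ ^ 2 / 2 + ‖zn - yn‖ ^ 2 / 2
      ≤ ρ * f xn zn + ‖xn - zn‖ ^ 2 / 2 :=
    ((hconv xn hxn).smul hρ.le).add_half_sq_norm_sub_le_of_forall_le hymin hyn hzn
  have hz_step : ρ * f yn zn + ‖xn - zn‖ ^ 2 / 2 + ‖xstar - zn‖ ^ 2 / 2
      ≤ ρ * f yn xstar + ‖xn - xstar‖ ^ 2 / 2 :=
    ((hconv yn hyn).smul hρ.le).add_half_sq_norm_sub_le_of_forall_le hzmin hzn hxs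
  have hyx : f yn xstar ≤ 0 := hpm xstar hxs yn hyn (hEP yn hyn)
  have hlip := mul_le_mul_of_nonneg_left (hlt xn hxn yn hyn zn hzn) hρ.le
  rw [norm_sub_rev zn yn] at hy_step
  rw [norm_sub_rev xstar zn] at hz_step
  rw [norm_sub_rev yn xn]
  linarith [mul_nonpos_of_nonneg_of_nonpos hρ.le hyx]

/-- Extragradient estimate: for a pseudomonotone, Lipschitz-type continuous bifunction `f`
with `x* ∈ EP(f,C)` and extragradient iterates `y_n`, `z_n`:
`‖z_n - x*‖² ≤ ‖x_n - x*‖² - (1 - 2ρc₁)‖y_n - x_n‖² - (1 - 2ρc₂)‖y_n - z_n‖²`. -/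
theorem stmt6 {H : Type*} [NormedAddCommGroup H] [InnerProductSpace ℝ H]
    (C : Set H) (hCne : C.Nonempty) (hCc : IsClosed C) (hCv : Convex ℝ C)
    (f : H → H → ℝ) (hf0 : ∀ x ∈ C, f x x = 0)
    (hpm : ∀ x ∈ C, ∀ y ∈ C, 0 ≤ f x y → f y x ≤ 0)
    (hconv : ∀ x ∈ C, ConvexOn ℝ C (f x))
    (hsub : ∀ x ∈ C, ∀ y ∈ C, ∃ g : H, ∀ z ∈ C, f x y + ⟪g, z - y⟫ ≤ f x z)
    (c₁ c₂ : ℝ) (hc₁ : 0 < c₁) (hc₂ : 0 < c₂)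
    (hlt : ∀ x ∈ C, ∀ y ∈ C, ∀ z ∈ C,
      f x z - c₁ * ‖x - y‖ ^ 2 - c₂ * ‖y - z‖ ^ 2 ≤ f x y + f y z)
    (ρ : ℝ) (hρ : 0 < ρ)
    (xstar : H) (hxs : xstar ∈ C) (hEP : ∀ y ∈ C, 0 ≤ f xstar y)
    (xn yn zn : H) (hxn : xn ∈ C) (hyn : yn ∈ C) (hzn : zn ∈ C)
    (hymin : ∀ y ∈ C,
      ρ * f xn yn + ‖xn - yn‖ ^ 2 / 2 ≤ ρ * f xn y + ‖xn - y‖ ^ 2 / 2)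
    (hzmin : ∀ y ∈ C,
      ρ * f yn zn + ‖xn - zn‖ ^ 2 / 2 ≤ ρ * f yn y + ‖xn - y‖ ^ 2 / 2) :
    ‖zn - xstar‖ ^ 2
      ≤ ‖xn - xstar‖ ^ 2 - (1 - 2 * ρ * c₁) * ‖yn - xn‖ ^ 2
          - (1 - 2 * ρ * c₂) * ‖yn - zn‖ ^ 2 :=
  stmt6_general C f hpm hconv c₁ c₂ hlt ρ hρ xstar hxs hEP xn yn zn hxn hyn hzn hymin hzmin
end

section
/- Let S : C → C be β-demicontractive, x* ∈ Fix(S), and β_n ∈ (0, (1-β)/2). Set x_{n+1} = (1-β_n)t_n + β_n S t_n for t_n ∈ C. Then ‖x_{n+1} - x*‖² ≤ ‖t_n - x*‖² - ‖x_{n+1} - t_n‖². -/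
open RealInnerProductSpace Filter Topology

/-- Mann-step estimate for a `β`-demicontractive map: if `x* ∈ Fix(S)`,
`β_n ∈ (0, (1-β)/2)`, `t_n ∈ C` and `x_{n+1} = (1-β_n)t_n + β_n S t_n`, then
`‖x_{n+1} - x*‖² ≤ ‖t_n - x*‖² - ‖x_{n+1} - t_n‖²`. -/
theorem stmt7 {H : Type*} [NormedAddCommGroup H] [InnerProductSpace ℝ H]
    (C : Set H) (hCne : C.Nonempty) (hCc : IsClosed C) (hCv : Convex ℝ C)
    (S : H → H) (hS : Set.MapsTo S C C)
    (β : ℝ) (hβ0 : 0 ≤ β) (hβ1 : β < 1)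
    (hdemi : ∀ p ∈ C, S p = p → ∀ x ∈ C,
      ‖S x - p‖ ^ 2 ≤ ‖x - p‖ ^ 2 + β * ‖x - S x‖ ^ 2)
    (xstar : H) (hxsC : xstar ∈ C) (hxs : S xstar = xstar)
    (βn : ℝ) (hβn0 : 0 < βn) (hβn1 : βn < (1 - β) / 2)
    (tn xn1 : H) (htn : tn ∈ C)
    (hxn1 : xn1 = (1 - βn) • tn + βn • S tn) :
    ‖xn1 - xstar‖ ^ 2 ≤ ‖tn - xstar‖ ^ 2 - ‖xn1 - tn‖ ^ 2 := by
  have hd := hdemi xstar hxsC hxs tn htn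
  set a := tn - xstar with ha
  set b := S tn - tn with hb
  have hSx : S tn - xstar = a + b := by rw [ha, hb]; abel
  have h1 : ‖S tn - xstar‖ ^ 2 = ‖a‖ ^ 2 + 2 * ⟪a, b⟫ + ‖b‖ ^ 2 := by
    rw [hSx, ← real_inner_self_eq_norm_sq, ← real_inner_self_eq_norm_sq,
      ← real_inner_self_eq_norm_sq, inner_add_add_self, real_inner_comm b a]
    ring
  have htS : ‖tn - S tn‖ = ‖b‖ := by rw [hb, ← norm_neg]; congr 1; abel
  have key : 2 * ⟪a, b⟫ ≤ (β - 1) * ‖b‖ ^ 2 := by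
    rw [h1, htS] at hd; linarith
  have hx1 : xn1 - xstar = a + βn • b := by
    rw [hxn1, ha, hb]; module
  have hx2 : xn1 - tn = βn • b := by
    rw [hxn1, hb]; module
  have h2 : ‖xn1 - xstar‖ ^ 2 = ‖a‖ ^ 2 + 2 * βn * ⟪a, b⟫ + βn ^ 2 * ‖b‖ ^ 2 := by
    rw [hx1, ← real_inner_self_eq_norm_sq, ← real_inner_self_eq_norm_sq,
      ← real_inner_self_eq_norm_sq, inner_add_add_self, real_inner_smul_left,
      real_inner_smul_right, real_inner_smul_right, real_inner_smul_left,
      real_inner_comm b a]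
    ring
  have h3 : ‖xn1 - tn‖ ^ 2 = βn ^ 2 * ‖b‖ ^ 2 := by
    rw [hx2, norm_smul, mul_pow]
    simp [abs_of_pos hβn0]
  have hb2 : 0 ≤ ‖b‖ ^ 2 := sq_nonneg _
  rw [h2, h3]
  nlinarith [sq_nonneg βn]
end

section
/- In Algorithm 2, if along a subsequence ‖x_{m+1} - t_m‖ → 0, then ‖S_j t_m - t_m‖ → 0 for every j ∈ J. -/
open RealInnerProductSpace Filter Topology

/-- Claim 3 for Algorithm 2: if `‖x_{m+1} - t_m‖ → 0` along the sequence, then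
`‖S_j t_m - t_m‖ → 0` for every `j ∈ J`. -/
theorem stmt12 {H : Type*} [NormedAddCommGroup H] [InnerProductSpace ℝ H]
    (M : ℕ) (hM : 0 < M) (S : Fin M → H → H)
    (β a : ℝ) (hβ0 : 0 ≤ β) (hβ1 : β < 1) (ha : 0 < a)
    (hdemi : ∀ j, ∀ p, S j p = p → ∀ x,
      ‖S j x - p‖ ^ 2 ≤ ‖x - p‖ ^ 2 + β * ‖x - S j x‖ ^ 2)
    (βn γ : ℕ → Fin M → ℝ)
    (hβn : ∀ m j, a ≤ βn m j ∧ βn m j < (1 - β) / 2)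
    (hγ : ∀ m j, 0 < γ m j ∧ γ m j < 1) (hγ1 : ∀ m, ∑ j, γ m j = 1)
    (hγliminf : ∀ j, 0 < Filter.liminf (fun m => γ m j) atTop)
    (t x : ℕ → H)
    (hx1 : ∀ m, x (m + 1) = ∑ j, γ m j • ((1 - βn m j) • t m + βn m j • S j (t m)))
    (xs : H) (hxs : ∀ j, S j xs = xs)
    (hbdd : ∃ K : ℝ, ∀ m, ‖t m‖ ≤ K ∧ ‖x m‖ ≤ K)
    (hconv : Tendsto (fun m => ‖x (m + 1) - t m‖) atTop (𝓝 0)) :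
    ∀ j, Tendsto (fun m => ‖S j (t m) - t m‖) atTop (𝓝 0) := by
  obtain ⟨K, hK⟩ := hbdd
  -- per-term estimate
  have step1 : ∀ m j, ‖((1 - βn m j) • t m + βn m j • S j (t m)) - xs‖ ^ 2 ≤
      ‖t m - xs‖ ^ 2 - a ^ 2 * ‖S j (t m) - t m‖ ^ 2 := by
    intro m j
    set s := βn m j with hs
    obtain ⟨hsa, hsb⟩ := hβn m j
    set d := S j (t m) - t m with hd
    set v := t m - xs with hv
    have hy : (1 - s) • t m + s • S j (t m) - xs = v + s • d := by
      simp only [hd, hv]; module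
    have hinner : 2 * ⟪d, v⟫ ≤ (β - 1) * ‖d‖ ^ 2 := by
      have h1 := hdemi j xs (hxs j) (t m)
      have h2 : S j (t m) - xs = d + v := by simp only [hd, hv]; abel
      have h3 : ‖t m - S j (t m)‖ = ‖d‖ := by rw [hd, norm_sub_rev]
      rw [h2, norm_add_sq_real, h3] at h1
      nlinarith [h1]
    rw [hy, norm_add_sq_real, real_inner_smul_right, norm_smul, Real.norm_eq_abs,
      abs_of_pos (lt_of_lt_of_le ha hsa), mul_pow]
    have hvd : ⟪v, d⟫ = ⟪d, v⟫ := real_inner_comm d v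
    rw [hvd]
    have hspos : 0 < s := lt_of_lt_of_le ha hsa
    have h4 : s * (2 * ⟪d, v⟫) ≤ s * ((β - 1) * ‖d‖ ^ 2) :=
      mul_le_mul_of_nonneg_left hinner hspos.le
    have h7 : a ^ 2 + s ^ 2 + s * (β - 1) ≤ 0 := by
      nlinarith [mul_le_mul hsa hsa ha.le hspos.le,
        mul_lt_mul_of_pos_left hsb hspos]
    have h8 : (a ^ 2 + s ^ 2 + s * (β - 1)) * ‖d‖ ^ 2 ≤ 0 :=
      mul_nonpos_of_nonpos_of_nonneg h7 (sq_nonneg _)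
    nlinarith [h4, h8]
  -- convexity estimate
  have step2 : ∀ m, ‖x (m + 1) - xs‖ ^ 2 ≤
      ∑ j, γ m j * ‖((1 - βn m j) • t m + βn m j • S j (t m)) - xs‖ ^ 2 := by
    intro m
    have hxe : x (m + 1) - xs =
        ∑ j, γ m j • (((1 - βn m j) • t m + βn m j • S j (t m)) - xs) := by
      rw [hx1 m]
      rw [Finset.sum_congr rfl (fun j _ => smul_sub (γ m j) _ xs), Finset.sum_sub_distrib,
        ← Finset.sum_smul, hγ1 m, one_smul]
    have htri : ‖x (m + 1) - xs‖ ≤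
        ∑ j, γ m j * ‖((1 - βn m j) • t m + βn m j • S j (t m)) - xs‖ := by
      rw [hxe]
      refine (norm_sum_le _ _).trans_eq ?_
      refine Finset.sum_congr rfl fun j _ => ?_
      rw [norm_smul, Real.norm_eq_abs, abs_of_pos (hγ m j).1]
    have hjensen : (∑ j, γ m j * ‖((1 - βn m j) • t m + βn m j • S j (t m)) - xs‖) ^ 2 ≤
        ∑ j, γ m j * ‖((1 - βn m j) • t m + βn m j • S j (t m)) - xs‖ ^ 2 := by
      have hcv : ConvexOn ℝ Set.univ (fun r : ℝ => r ^ 2) :=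
        Even.convexOn_pow (by norm_num)
      have := hcv.map_sum_le (t := Finset.univ)
        (w := fun j => γ m j)
        (p := fun j => ‖((1 - βn m j) • t m + βn m j • S j (t m)) - xs‖)
        (fun j _ => (hγ m j).1.le) (hγ1 m) (fun j _ => Set.mem_univ _)
      simpa [smul_eq_mul] using this
    calc ‖x (m + 1) - xs‖ ^ 2
        ≤ (∑ j, γ m j * ‖((1 - βn m j) • t m + βn m j • S j (t m)) - xs‖) ^ 2 := by
          apply pow_le_pow_left₀ (norm_nonneg _) htri
      _ ≤ _ := hjensen
  -- combined estimate
  have key : ∀ m, a ^ 2 * (∑ j, γ m j * ‖S j (t m) - t m‖ ^ 2) ≤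
      ‖t m - xs‖ ^ 2 - ‖x (m + 1) - xs‖ ^ 2 := by
    intro m
    have h1 := step2 m
    have h2 : ∑ j, γ m j * ‖((1 - βn m j) • t m + βn m j • S j (t m)) - xs‖ ^ 2 ≤
        ∑ j, γ m j * (‖t m - xs‖ ^ 2 - a ^ 2 * ‖S j (t m) - t m‖ ^ 2) := by
      refine Finset.sum_le_sum fun j _ => ?_
      exact mul_le_mul_of_nonneg_left (step1 m j) (hγ m j).1.le
    have h3 : ∑ j, γ m j * (‖t m - xs‖ ^ 2 - a ^ 2 * ‖S j (t m) - t m‖ ^ 2) =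
        ‖t m - xs‖ ^ 2 - a ^ 2 * ∑ j, γ m j * ‖S j (t m) - t m‖ ^ 2 := by
      simp only [mul_sub]
      rw [Finset.sum_sub_distrib, ← Finset.sum_mul, hγ1 m, one_mul, Finset.mul_sum]
      congr 1
      exact Finset.sum_congr rfl fun j _ => by ring
    linarith [h1.trans (h2.trans_eq h3)]
  -- the sum tends to 0
  set E : ℕ → ℝ := fun m => ∑ j, γ m j * ‖S j (t m) - t m‖ ^ 2 with hE
  have hEnn : ∀ m, 0 ≤ E m := fun m =>
    Finset.sum_nonneg fun j _ => mul_nonneg (hγ m j).1.le (sq_nonneg _)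
  have hEbound : ∀ m, E m ≤ (2 * (K + ‖xs‖) / a ^ 2) * ‖x (m + 1) - t m‖ := by
    intro m
    have hk := key m
    have ht1 : ‖t m - xs‖ ≤ K + ‖xs‖ :=
      (norm_sub_le _ _).trans (by linarith [(hK m).1])
    have ht2 : ‖x (m + 1) - xs‖ ≤ K + ‖xs‖ :=
      (norm_sub_le _ _).trans (by linarith [(hK (m + 1)).2])
    have ht3 : ‖t m - xs‖ ≤ ‖x (m + 1) - xs‖ + ‖x (m + 1) - t m‖ := by
      have : t m - xs = (x (m + 1) - xs) - (x (m + 1) - t m) := by abel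
      rw [this]; exact norm_sub_le _ _
    have ha2 : (0:ℝ) < a ^ 2 := by positivity
    have hdiff : ‖t m - xs‖ ^ 2 - ‖x (m + 1) - xs‖ ^ 2 ≤
        2 * (K + ‖xs‖) * ‖x (m + 1) - t m‖ := by
      nlinarith [norm_nonneg (x (m + 1) - xs), norm_nonneg (t m - xs),
        norm_nonneg (x (m + 1) - t m)]
    simp only [hE]
    rw [div_mul_eq_mul_div, le_div_iff₀ ha2]
    nlinarith [hk, hdiff]
  have hEtend : Tendsto E atTop (𝓝 0) := by
    have hg : Tendsto (fun m => (2 * (K + ‖xs‖) / a ^ 2) * ‖x (m + 1) - t m‖) atTop (𝓝 0) := by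
      simpa using hconv.const_mul (2 * (K + ‖xs‖) / a ^ 2)
    exact squeeze_zero hEnn hEbound hg
  intro j
  -- individual weighted term tends to 0
  have hterm : Tendsto (fun m => γ m j * ‖S j (t m) - t m‖ ^ 2) atTop (𝓝 0) := by
    refine squeeze_zero (fun m => mul_nonneg (hγ m j).1.le (sq_nonneg _)) (fun m => ?_) hEtend
    simp only [hE]
    exact Finset.single_le_sum (f := fun i => γ m i * ‖S i (t m) - t m‖ ^ 2)
      (fun i _ => mul_nonneg (hγ m i).1.le (sq_nonneg _)) (Finset.mem_univ j)
  -- eventually γ m j is bounded below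
  set L := Filter.liminf (fun m => γ m j) atTop with hL
  have hL0 : 0 < L := hγliminf j
  have hcobdd : IsCoboundedUnder (· ≥ ·) atTop (fun m => γ m j) :=
    isCoboundedUnder_ge_of_le atTop (x := 1) fun m => (hγ m j).2.le
  have hev : ∀ᶠ m in atTop, L / 2 < γ m j :=
    eventually_lt_of_lt_liminf (by linarith)
      (isBoundedUnder_of ⟨0, fun m => (hγ m j).1.le⟩)
  have hsq : Tendsto (fun m => ‖S j (t m) - t m‖ ^ 2) atTop (𝓝 0) := by
    refine squeeze_zero' (g := fun m => (2 / L) * (γ m j * ‖S j (t m) - t m‖ ^ 2))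
      (Eventually.of_forall fun m => sq_nonneg _) ?_ ?_
    · filter_upwards [hev] with m hm
      have hL2 : (0:ℝ) < L / 2 := by linarith
      calc ‖S j (t m) - t m‖ ^ 2
          = (γ m j * ‖S j (t m) - t m‖ ^ 2) / γ m j := by
            rw [mul_comm, mul_div_assoc, div_self (ne_of_gt (hγ m j).1), mul_one]
        _ ≤ (γ m j * ‖S j (t m) - t m‖ ^ 2) / (L / 2) := by
            apply div_le_div_of_nonneg_left _ hL2 hm.le
            exact mul_nonneg (hγ m j).1.le (sq_nonneg _)
        _ = (2 / L) * (γ m j * ‖S j (t m) - t m‖ ^ 2) := by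
            field_simp
    · simpa using hterm.const_mul (2 / L)
  have := hsq.sqrt
  simp only [Real.sqrt_zero] at this
  refine this.congr fun m => ?_
  rw [Real.sqrt_sq (norm_nonneg _)]
end
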